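/- If H is a graph on vertex set [n] that is not Laman, then for every pair of rooted trees T₁, T₂ on leaf set [n], the restricted clade graph G^H_{T₁,T₂} is not a tree (it either has the wrong number of edges or contains a cycle). -/

import Mathlib

/-- A rooted tree on leaf set `[n]`, identified with its family of clades. -/
def IsCladeFamily {n : ℕ} (F : Finset (Finset (Fin n))) : Prop :=
  Finset.univ ∈ F ∧ (∀ i : Fin n, {i} ∈ F) ∧
  ∀ A ∈ F, ∀ B ∈ F, A ⊆ B ∨ B ⊆ A ∨ Disjoint A B

/-- The (non-singleton) clades of a tree: the sets of leaves below internal vertices. -/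
def nsClades {n : ℕ} (F : Finset (Finset (Fin n))) : Finset (Finset (Fin n)) :=
  F.filter (fun A => 2 ≤ A.card)

/-- The most recent common ancestor (smallest clade containing both `u` and `v`). -/
def mca {n : ℕ} (F : Finset (Finset (Fin n))) (u v : Fin n) : Finset (Fin n) :=
  (F.filter (fun A => u ∈ A ∧ v ∈ A)).inf id

/-- The vertex set of the clade graph: the disjoint union of the clades of the two trees. -/
def CladeVert {n : ℕ} (F₁ F₂ : Finset (Finset (Fin n))) : Type :=
  {A // A ∈ nsClades F₁} ⊕ {A // A ∈ nsClades F₂}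

/-- The restricted clade graph `G^H_{T₁,T₂}` (with parallel edges collapsed): `A` on the
`T₁` side is adjacent to `B` on the `T₂` side iff some edge `{i,j}` of `H` has `A` as its
minimal `T₁`-clade and `B` as its minimal `T₂`-clade. -/
def rCladeGraph {n : ℕ} (H : SimpleGraph (Fin n)) (F₁ F₂ : Finset (Finset (Fin n))) :
    SimpleGraph (CladeVert F₁ F₂) :=
  SimpleGraph.fromRel (fun x y => ∃ i j : Fin n, i ≠ j ∧ H.Adj i j ∧
    ∃ (hA : mca F₁ i j ∈ nsClades F₁) (hB : mca F₂ i j ∈ nsClades F₂),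
      x = Sum.inl ⟨mca F₁ i j, hA⟩ ∧ y = Sum.inr ⟨mca F₂ i j, hB⟩)

/-- The restricted clade graph (as a multigraph, with one edge per edge of `H`) is a
tree: it is connected, has `2n − 2` vertices, and has `2n − 3` edges. -/
def RCladeGraphIsTree {n : ℕ} (H : SimpleGraph (Fin n))
    (F₁ F₂ : Finset (Finset (Fin n))) : Prop :=
  (rCladeGraph H F₁ F₂).Connected ∧
  Nat.card (CladeVert F₁ F₂) = 2 * n - 2 ∧
  Nat.card H.edgeSet = 2 * n - 3

/-- The number of edges of `H` lying inside the vertex set `V`. -/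
noncomputable def edgesWithin {n : ℕ} (H : SimpleGraph (Fin n)) (V : Finset (Fin n)) : ℕ :=
  Nat.card {e : Sym2 (Fin n) // e ∈ H.edgeSet ∧ ∀ v ∈ e, v ∈ V}

/-- A graph on `n` vertices is Laman if it has `2n − 3` edges and every subgraph on `v`
vertices has at most `2v − 3` edges. -/
def IsLaman (n : ℕ) (H : SimpleGraph (Fin n)) : Prop :=
  Nat.card H.edgeSet = 2 * n - 3 ∧
  ∀ V : Finset (Fin n), 2 ≤ V.card → edgesWithin H V ≤ 2 * V.card - 3

/-!
Suppose the clade graph `G` is connected on `2n - 2` vertices while `H` has `2n - 3` edges.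
The edges of `H` map onto those of `G`, so `G` is a tree and no two edges of `H` are merged.
For `V ⊆ [n]` the edges of `H[V]` therefore map injectively into the forest `G`, and their
endpoints are most recent common ancestors of pairs of leaves of `V`. Intersected with `V`,
these clades form a laminar family of sets of size at least two, so each tree contributes at
most `|V| - 1` of them. A forest on at most `2|V| - 2` vertices has at most `2|V| - 3` edges,
so `H` would be Laman.
-/

namespace SimpleGraph

variable {V : Type*} {G : SimpleGraph V}

theorem IsAcyclic.card_edgeSet_le [Finite V] (h : G.IsAcyclic) :
    Nat.card G.edgeSet ≤ Nat.card V - 1 := by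
  rcases isEmpty_or_nonempty V with hV | hV
  · simp
  obtain ⟨T, hGT, -, hT⟩ := connected_top.exists_isTree_le_of_le_of_isAcyclic le_top h
  have hTcard := (isTree_iff_connected_and_card.mp hT).2
  have hGT : Nat.card G.edgeSet ≤ Nat.card T.edgeSet := by
    simp only [Nat.card_coe_set_eq]
    exact Set.ncard_le_ncard (edgeSet_mono hGT)
  omega

theorem IsAcyclic.card_edgeSet_le_of_support_subset [Finite V] (h : G.IsAcyclic)
    {s : Finset V} (hs : G.support ⊆ s) : Nat.card G.edgeSet ≤ s.card - 1 := by
  classical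
  have := Fintype.ofFinite V
  have hinduce : Nat.card (G.induce s).edgeSet = Nat.card G.edgeSet := by
    simpa only [edgeFinset_card, ← Nat.card_eq_fintype_card]
      using card_edgeFinset_induce_of_support_subset hs
  have hacyc := (h.induce s).card_edgeSet_le
  rwa [hinduce, Nat.card_coe_set_eq (s : Set V), Set.ncard_coe_finset] at hacyc

end SimpleGraph

namespace Finset

variable {α : Type*} [DecidableEq α]

theorem injOn_sdiff_erase {M : Finset α} {x : α} (hx : x ∈ M) :
    Set.InjOn (· \ M.erase x) {A | M ⊆ A ∨ Disjoint M A} := by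
  have hsplit : ∀ A, M ⊆ A ∨ Disjoint M A →
      (x ∈ A \ M.erase x ∧ A = A \ M.erase x ∪ M.erase x) ∨
        (x ∉ A \ M.erase x ∧ A = A \ M.erase x) := by
    rintro A (h | h)
    · exact .inl ⟨by simp [h hx], (sdiff_union_of_subset ((erase_subset x M).trans h)).symm⟩
    · refine .inr ⟨fun hxA => disjoint_left.mp h hx (mem_sdiff.mp hxA).1, ?_⟩
      exact (sdiff_eq_self_of_disjoint (h.mono_left (erase_subset x M)).symm).symm
  intro A hA B hB hAB
  simp only at hAB
  rcases hsplit A hA with ⟨hxA, hA'⟩ | ⟨hxA, hA'⟩ <;>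
    rcases hsplit B hB with ⟨hxB, hB'⟩ | ⟨hxB, hB'⟩
  · rw [hA', hB', hAB]
  · exact absurd (hAB ▸ hxA) hxB
  · exact absurd (hAB ▸ hxB) hxA
  · rw [hA', hB', hAB]

end Finset

def IsLaminar {α : Type*} (T : Finset (Finset α)) : Prop :=
  ∀ A ∈ T, ∀ B ∈ T, A ⊆ B ∨ B ⊆ A ∨ Disjoint A B

namespace IsLaminar

variable {α : Type*} {T : Finset (Finset α)}

theorem mono {S : Finset (Finset α)} (hT : IsLaminar T) (hST : S ⊆ T) : IsLaminar S :=
  fun A hA B hB => hT A (hST hA) B (hST hB)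

theorem image [DecidableEq α] (hT : IsLaminar T) {f : Finset α → Finset α} (hf : Monotone f)
    (hdisj : ∀ A B, Disjoint A B → Disjoint (f A) (f B)) : IsLaminar (T.image f) := by
  simp only [IsLaminar, Finset.forall_mem_image]
  intro A hA B hB
  rcases hT A hA B hB with h | h | h
  exacts [.inl (hf h), .inr (.inl (hf h)), .inr (.inr (hdisj A B h))]

theorem ssubset_or_disjoint_of_minimal (hT : IsLaminar T) {M A : Finset α}
    (hM : Minimal (· ∈ T) M) (hA : A ∈ T) (hAM : A ≠ M) : M ⊂ A ∨ Disjoint M A := by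
  rcases hT M hM.prop A hA with h | h | h
  · exact .inl (h.ssubset_of_ne hAM.symm)
  · exact absurd (hM.eq_of_le hA h) hAM
  · exact .inr h

/-- Contract a minimal member `M` to one of its points `x`: the other members stay laminar,
distinct and of size at least two, and the ground set loses `|M| - 1 ≥ 1` points. -/
theorem card_le_card_sub_one [DecidableEq α] (hT : IsLaminar T) {V : Finset α}
    (hTV : ∀ A ∈ T, A ⊆ V) (hT2 : ∀ A ∈ T, 2 ≤ A.card) : T.card ≤ V.card - 1 := by
  obtain ⟨k, hk⟩ : ∃ k, T.card = k := ⟨_, rfl⟩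
  induction k generalizing T V with
  | zero => omega
  | succ k ih =>
    obtain ⟨M, hM⟩ := Finset.exists_minimal (s := T) (Finset.card_pos.mp (by omega))
    have hM2 := hT2 M hM.prop
    obtain ⟨x, hx⟩ : M.Nonempty := Finset.card_pos.mp (by omega)
    set R := M.erase x
    have hdich : ∀ A ∈ T.erase M, M ⊂ A ∨ Disjoint M A := fun A hA =>
      hT.ssubset_or_disjoint_of_minimal hM (Finset.mem_of_mem_erase hA)
        (Finset.ne_of_mem_erase hA)
    have hinj : Set.InjOn (· \ R) (T.erase M) := (Finset.injOn_sdiff_erase hx).mono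
      fun A hA => (hdich A hA).imp_left (·.subset)
    have hcard : ((T.erase M).image (· \ R)).card = k := by
      rw [Finset.card_image_of_injOn hinj, Finset.card_erase_of_mem hM.prop]
      omega
    have hlam : IsLaminar ((T.erase M).image (· \ R)) :=
      (hT.mono (Finset.erase_subset M T)).image (fun _ _ h => Finset.sdiff_subset_sdiff h le_rfl)
        fun _ _ h => h.mono Finset.sdiff_subset Finset.sdiff_subset
    have hsub : ∀ A ∈ (T.erase M).image (· \ R), A ⊆ V \ R := by
      simp only [Finset.forall_mem_image]
      exact fun A hA => Finset.sdiff_subset_sdiff (hTV A (Finset.mem_of_mem_erase hA)) le_rfl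
    have htwo : ∀ A ∈ (T.erase M).image (· \ R), 2 ≤ A.card := by
      simp only [Finset.forall_mem_image]
      intro A hA
      rcases hdich A hA with h | h
      · have hRA : R ⊆ A := (Finset.erase_subset x M).trans h.subset
        have := Finset.card_lt_card h
        rw [Finset.card_sdiff_of_subset hRA, Finset.card_erase_of_mem hx]
        omega
      · rw [Finset.sdiff_eq_self_of_disjoint (h.mono_left (Finset.erase_subset x M)).symm]
        exact hT2 A (Finset.mem_of_mem_erase hA)
    have hRV : R ⊆ V := (Finset.erase_subset x M).trans (hTV M hM.prop)
    have hMV := Finset.card_le_card (hTV M hM.prop)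
    have := ih hlam hsub htwo hcard
    rw [Finset.card_sdiff_of_subset hRV, Finset.card_erase_of_mem hx] at this
    omega

end IsLaminar

section Clades

variable {n : ℕ} {F : Finset (Finset (Fin n))} {u v : Fin n}

theorem mca_comm (F : Finset (Finset (Fin n))) (u v : Fin n) : mca F u v = mca F v u := by
  simp only [mca, and_comm]

theorem mem_mca_left : u ∈ mca F u v :=
  Finset.mem_inf.mpr fun _ hA => (Finset.mem_filter.mp hA).2.1

theorem mem_mca_right : v ∈ mca F u v :=
  Finset.mem_inf.mpr fun _ hA => (Finset.mem_filter.mp hA).2.2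

theorem mca_subset {A : Finset (Fin n)} (hA : A ∈ F) (hu : u ∈ A) (hv : v ∈ A) :
    mca F u v ⊆ A :=
  Finset.inf_le (f := id) (Finset.mem_filter.mpr ⟨hA, hu, hv⟩)

theorem IsCladeFamily.isLaminar (hF : IsCladeFamily F) : IsLaminar F := hF.2.2

/-- The clades containing `u` form a chain, so their intersection is one of them. -/
theorem IsCladeFamily.mca_mem (hF : IsCladeFamily F) (u v : Fin n) : mca F u v ∈ F := by
  refine (Finset.inf_mem {A | A ∈ F ∧ u ∈ A ∧ v ∈ A} ⟨hF.1, by simp, by simp⟩ ?_ _ id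
    fun A hA => Finset.mem_filter.mp hA).1
  rintro A ⟨hA, huA, hvA⟩ B ⟨hB, huB, hvB⟩
  rcases hF.isLaminar A hA B hB with h | h | h
  · simpa [Finset.inf_eq_inter, Finset.inter_eq_left.mpr h] using ⟨hA, huA, hvA⟩
  · simpa [Finset.inf_eq_inter, Finset.inter_eq_right.mpr h] using ⟨hB, huB, hvB⟩
  · exact absurd huB (Finset.disjoint_left.mp h huA)

theorem IsCladeFamily.mca_mem_nsClades (hF : IsCladeFamily F) (huv : u ≠ v) :
    mca F u v ∈ nsClades F :=
  Finset.mem_filter.mpr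
    ⟨hF.mca_mem u v, Finset.one_lt_card.mpr ⟨u, mem_mca_left, v, mem_mca_right, huv⟩⟩

/-- The traces on `V` of these clades are the non-singleton clades of the tree restricted
to `V`. -/
def mcaClades (F : Finset (Finset (Fin n))) (V : Finset (Fin n)) : Finset (Finset (Fin n)) :=
  V.offDiag.image fun p => mca F p.1 p.2

theorem mem_mcaClades {V A : Finset (Fin n)} :
    A ∈ mcaClades F V ↔ ∃ i ∈ V, ∃ j ∈ V, i ≠ j ∧ mca F i j = A := by
  simp [mcaClades, and_assoc]

theorem IsCladeFamily.card_mcaClades_le (hF : IsCladeFamily F) (V : Finset (Fin n)) :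
    (mcaClades F V).card ≤ V.card - 1 := by
  have hsub : ∀ {A}, A ∈ mcaClades F V → ∀ {B}, B ∈ F → A ∩ V ⊆ B → A ⊆ B := by
    intro A hA B hB hAB
    obtain ⟨i, hi, j, hj, -, rfl⟩ := mem_mcaClades.mp hA
    exact mca_subset hB (hAB (Finset.mem_inter.mpr ⟨mem_mca_left, hi⟩))
      (hAB (Finset.mem_inter.mpr ⟨mem_mca_right, hj⟩))
  have hF' : mcaClades F V ⊆ F := fun A hA => by
    obtain ⟨i, -, j, -, -, rfl⟩ := mem_mcaClades.mp hA
    exact hF.mca_mem i j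
  have hinj : Set.InjOn (· ∩ V) (mcaClades F V) := fun A hA B hB hAB =>
    (hsub hA (hF' hB) (hAB.le.trans Finset.inter_subset_left)).antisymm
      (hsub hB (hF' hA) (hAB.ge.trans Finset.inter_subset_left))
  rw [← Finset.card_image_of_injOn hinj]
  refine ((hF.isLaminar.mono hF').image (fun _ _ h => Finset.inter_subset_inter h le_rfl)
    fun _ _ h => h.mono Finset.inter_subset_left Finset.inter_subset_left).card_le_card_sub_one
    ?_ ?_ <;> simp only [Finset.forall_mem_image]
  · exact fun _ _ => Finset.inter_subset_right
  · intro A hA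
    obtain ⟨i, hi, j, hj, hij, rfl⟩ := mem_mcaClades.mp hA
    exact Finset.one_lt_card.mpr ⟨i, Finset.mem_inter.mpr ⟨mem_mca_left, hi⟩,
      j, Finset.mem_inter.mpr ⟨mem_mca_right, hj⟩, hij⟩

end Clades

section CladeGraph

variable {n : ℕ} {F₁ F₂ : Finset (Finset (Fin n))}

instance : Finite (CladeVert F₁ F₂) := inferInstanceAs (Finite (_ ⊕ _))

def CladeVert.val : CladeVert F₁ F₂ → Finset (Fin n) ⊕ Finset (Fin n) :=
  Sum.map Subtype.val Subtype.val

theorem CladeVert.val_injective :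
    Function.Injective (CladeVert.val (F₁ := F₁) (F₂ := F₂)) :=
  Sum.map_injective.mpr ⟨Subtype.val_injective, Subtype.val_injective⟩

/-- The edge `e_{ij}` of the clade graph, with its endpoints read as plain clades. -/
def cladeEdge (F₁ F₂ : Finset (Finset (Fin n))) :
    Sym2 (Fin n) → Sym2 (Finset (Fin n) ⊕ Finset (Fin n)) :=
  Sym2.lift ⟨fun i j => s(.inl (mca F₁ i j), .inr (mca F₂ i j)),
    fun i j => by dsimp only; rw [mca_comm F₁, mca_comm F₂]⟩

theorem image_val_edgeSet_rCladeGraph (h₁ : IsCladeFamily F₁) (h₂ : IsCladeFamily F₂)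
    (H : SimpleGraph (Fin n)) :
    Sym2.map CladeVert.val '' (rCladeGraph H F₁ F₂).edgeSet =
      cladeEdge F₁ F₂ '' H.edgeSet := by
  ext e
  simp only [Set.mem_image]
  constructor
  · rintro ⟨e, he, rfl⟩
    induction e with
    | _ x y =>
      obtain ⟨-, ⟨i, j, -, hij, -, -, rfl, rfl⟩ | ⟨i, j, -, hij, -, -, rfl, rfl⟩⟩ := he
      · exact ⟨s(i, j), hij, rfl⟩
      · exact ⟨s(i, j), hij, Sym2.eq_swap⟩
  · rintro ⟨e, he, rfl⟩
    induction e with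
    | _ i j =>
      have hA := h₁.mca_mem_nsClades he.ne
      have hB := h₂.mca_mem_nsClades he.ne
      exact ⟨s(.inl ⟨_, hA⟩, .inr ⟨_, hB⟩),
        ⟨Sum.inl_ne_inr, .inl ⟨i, j, he.ne, he, hA, hB, rfl, rfl⟩⟩, rfl⟩

theorem ncard_edgeSet_rCladeGraph (h₁ : IsCladeFamily F₁) (h₂ : IsCladeFamily F₂)
    (H : SimpleGraph (Fin n)) :
    (rCladeGraph H F₁ F₂).edgeSet.ncard = (cladeEdge F₁ F₂ '' H.edgeSet).ncard := by
  rw [← image_val_edgeSet_rCladeGraph h₁ h₂,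
    Set.ncard_image_of_injective _ (Sym2.map.injective CladeVert.val_injective)]

theorem ncard_edgeSet_rCladeGraph_le (h₁ : IsCladeFamily F₁) (h₂ : IsCladeFamily F₂)
    (H : SimpleGraph (Fin n)) : (rCladeGraph H F₁ F₂).edgeSet.ncard ≤ H.edgeSet.ncard :=
  ncard_edgeSet_rCladeGraph h₁ h₂ H ▸ Set.ncard_image_le

/-- The hypothesis says that no two edges of `H` are merged in the clade graph. -/
theorem ncard_edgeSet_rCladeGraph_of_le (h₁ : IsCladeFamily F₁) (h₂ : IsCladeFamily F₂)
    {H H' : SimpleGraph (Fin n)} (hle : H' ≤ H)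
    (hH : (rCladeGraph H F₁ F₂).edgeSet.ncard = H.edgeSet.ncard) :
    (rCladeGraph H' F₁ F₂).edgeSet.ncard = H'.edgeSet.ncard := by
  rw [ncard_edgeSet_rCladeGraph h₁ h₂] at hH ⊢
  exact ((Set.injOn_of_ncard_image_eq hH).mono (SimpleGraph.edgeSet_mono hle)).ncard_image

theorem rCladeGraph_mono {H H' : SimpleGraph (Fin n)} (hle : H' ≤ H) :
    rCladeGraph H' F₁ F₂ ≤ rCladeGraph H F₁ F₂ := by
  rintro x y ⟨hxy, ⟨i, j, hij, hadj, hrest⟩ | ⟨i, j, hij, hadj, hrest⟩⟩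
  exacts [⟨hxy, .inl ⟨i, j, hij, hle hadj, hrest⟩⟩,
    ⟨hxy, .inr ⟨i, j, hij, hle hadj, hrest⟩⟩]

def mcaCladeVerts (F₁ F₂ : Finset (Finset (Fin n))) (V : Finset (Fin n)) :
    Finset (CladeVert F₁ F₂) :=
  ((mcaClades F₁ V).subtype (· ∈ nsClades F₁)).disjSum
    ((mcaClades F₂ V).subtype (· ∈ nsClades F₂))

theorem card_mcaCladeVerts_le (h₁ : IsCladeFamily F₁) (h₂ : IsCladeFamily F₂)
    (V : Finset (Fin n)) : (mcaCladeVerts F₁ F₂ V).card ≤ 2 * (V.card - 1) := by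
  have hcard₁ := h₁.card_mcaClades_le V
  have hcard₂ := h₂.card_mcaClades_le V
  have hsub₁ := Finset.card_filter_le (mcaClades F₁ V) (· ∈ nsClades F₁)
  have hsub₂ := Finset.card_filter_le (mcaClades F₂ V) (· ∈ nsClades F₂)
  refine (Finset.card_disjSum _ _).trans_le ?_
  rw [Finset.card_subtype, Finset.card_subtype]
  omega

theorem support_rCladeGraph_subset {H : SimpleGraph (Fin n)} {V : Finset (Fin n)}
    (hH : H.support ⊆ V) : (rCladeGraph H F₁ F₂).support ⊆ mcaCladeVerts F₁ F₂ V := by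
  have hmem : ∀ {i j}, H.Adj i j → i ≠ j → ∀ F, mca F i j ∈ mcaClades F V :=
    fun hadj hij _ =>
      mem_mcaClades.mpr ⟨_, hH ⟨_, hadj⟩, _, hH ⟨_, hadj.symm⟩, hij, rfl⟩
  rintro x ⟨y, -, ⟨i, j, hij, hadj, -, -, rfl, rfl⟩ | ⟨i, j, hij, hadj, -, -, rfl, rfl⟩⟩
  · exact Finset.inl_mem_disjSum.mpr (Finset.mem_subtype.mpr (hmem hadj hij F₁))
  · exact Finset.inr_mem_disjSum.mpr (Finset.mem_subtype.mpr (hmem hadj hij F₂))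

end CladeGraph

section SpanningInduce

variable {n : ℕ} {H : SimpleGraph (Fin n)} {V : Finset (Fin n)}

def spanningInduce (H : SimpleGraph (Fin n)) (V : Finset (Fin n)) : SimpleGraph (Fin n) :=
  SimpleGraph.fromEdgeSet {e | e ∈ H.edgeSet ∧ ∀ v ∈ e, v ∈ V}

theorem spanningInduce_le : spanningInduce H V ≤ H :=
  fun _ _ hadj => hadj.1.1

theorem support_spanningInduce_subset : (spanningInduce H V).support ⊆ V :=
  fun a ⟨b, hadj⟩ => hadj.1.2 a (Sym2.mem_mk_left a b)

theorem ncard_edgeSet_spanningInduce : (spanningInduce H V).edgeSet.ncard = edgesWithin H V := by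
  rw [spanningInduce, SimpleGraph.edgeSet_fromEdgeSet, sdiff_eq_left.mpr]
  · exact (Nat.card_coe_set_eq _).symm
  exact Set.disjoint_left.mpr fun e he => H.not_isDiag_of_mem_edgeSet he.1

end SpanningInduce

/-- If `H` is not Laman, then for every pair of rooted trees `T₁, T₂` on leaf set `[n]`
the restricted clade graph `G^H_{T₁,T₂}` is not a tree. -/
theorem not_laman_not_tree {n : ℕ} (H : SimpleGraph (Fin n)) (hH : ¬ IsLaman n H)
    (F₁ F₂ : Finset (Finset (Fin n)))
    (h₁ : IsCladeFamily F₁) (h₂ : IsCladeFamily F₂) :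
    ¬ RCladeGraphIsTree H F₁ F₂ := by
  rintro ⟨hconn, hvert, hedge⟩
  refine hH ⟨hedge, fun V _ => ?_⟩
  have hpos : 0 < Nat.card (CladeVert F₁ F₂) := have := hconn.nonempty; Nat.card_pos
  have hconn_card := hconn.card_vert_le_card_edgeSet_add_one
  have hle := ncard_edgeSet_rCladeGraph_le h₁ h₂ H
  rw [Nat.card_coe_set_eq] at hconn_card hedge
  have heq : (rCladeGraph H F₁ F₂).edgeSet.ncard = H.edgeSet.ncard := by omega
  have hacyc : (rCladeGraph H F₁ F₂).IsAcyclic :=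
    (SimpleGraph.isTree_iff_connected_and_card.mpr
      ⟨hconn, by rw [Nat.card_coe_set_eq]; omega⟩).isAcyclic
  have hsupp := support_rCladeGraph_subset (F₁ := F₁) (F₂ := F₂) (V := V)
    (support_spanningInduce_subset (H := H))
  have hforest :=
    (hacyc.anti (rCladeGraph_mono spanningInduce_le)).card_edgeSet_le_of_support_subset hsupp
  rw [Nat.card_coe_set_eq, ncard_edgeSet_rCladeGraph_of_le h₁ h₂ spanningInduce_le heq,
    ncard_edgeSet_spanningInduce] at hforest
  have := card_mcaCladeVerts_le h₁ h₂ V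
  omega
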